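/- Let Q be a polynomial of degree m with positive leading coefficient q_m. Then there exists n₁ ∈ ℕ such that for all n ≥ n₁ there is a real number β_n > 0 with (1/(2π))∫₀^{β_n} Q'(x)√(x/(β_n−x)) dx = n; moreover β_n·n^{-1/m} → ((1/2) m q_m A_m)^{-1/m} as n → ∞, where A_m = ∏_{j=1}^m (2j−1)/(2j). -/

import Mathlib

/-!
Substituting `x = β t`, the MRS integral of a polynomial `p` becomes a polynomial in `β`: the
monomial `x ^ k` contributes `β ^ (k + 1)` times the Beta integral `B(k + 3/2, 1/2) = π A_{k+1}`.
For `p = Q'` this polynomial vanishes at `0` and has degree `m` and leading coefficient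
`c = (1/2) m q_m A_m > 0`, so the intermediate value theorem yields `β_n`, the `β_n` tend to
infinity, and `P(β) ~ c β ^ m` turns `P(β_n) = n` into `β_n ^ m ~ n / c`.
-/

open Filter Topology Polynomial MeasureTheory Asymptotics
open scoped Real

noncomputable def wallisProduct (n : ℕ) : ℝ :=
  ∏ j ∈ Finset.Icc 1 n, (2 * (j : ℝ) - 1) / (2 * (j : ℝ))

lemma wallisProduct_pos (n : ℕ) : 0 < wallisProduct n :=
  Finset.prod_pos fun j hj => by
    have : (1 : ℝ) ≤ j := by exact_mod_cast (Finset.mem_Icc.1 hj).1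
    apply div_pos <;> linarith

lemma wallisProduct_succ (n : ℕ) :
    wallisProduct (n + 1) = wallisProduct n * ((n + 1 / 2) / (n + 1)) := by
  rw [wallisProduct, Finset.prod_Icc_succ_top (by omega), ← wallisProduct]
  push_cast
  congr 1
  field_simp
  ring

lemma Real.Gamma_nat_add_half_div_Gamma_nat_add_one (n : ℕ) :
    Gamma (n + 1 / 2) / Gamma (n + 1) = √π * wallisProduct n := by
  induction n with
  | zero => simpa [wallisProduct] using Gamma_one_half_eq
  | succ n ih =>
    rw [Nat.cast_succ, add_right_comm, Gamma_add_one (by positivity),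
      Gamma_add_one (by positivity), wallisProduct_succ, ← mul_assoc, ← ih, mul_div_mul_comm,
      mul_comm]

lemma integral_rpow_mul_one_sub_rpow {a b : ℝ} (ha : 0 < a) (hb : 0 < b) :
    ∫ t in (0 : ℝ)..1, t ^ (a - 1) * (1 - t) ^ (b - 1) =
      Real.Gamma a * Real.Gamma b / Real.Gamma (a + b) := by
  have hbeta := Complex.betaIntegral_eq_Gamma_mul_div a b (by simpa) (by simpa)
  rw [← Complex.ofReal_add, Complex.Gamma_ofReal, Complex.Gamma_ofReal, Complex.Gamma_ofReal,
    Complex.betaIntegral] at hbeta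
  apply Complex.ofReal_injective
  rw [← intervalIntegral.integral_ofReal]
  push_cast
  rw [← hbeta]
  refine intervalIntegral.integral_congr fun t ht => ?_
  rw [Set.uIcc_of_le zero_le_one] at ht
  rw [Complex.ofReal_cpow ht.1, Complex.ofReal_cpow (by linarith [ht.2])]
  push_cast
  ring_nf

lemma pow_mul_sqrt_div_one_sub_eq_rpow (k : ℕ) {t : ℝ} (ht : t ∈ Set.Icc (0 : ℝ) 1) :
    t ^ k * √(t / (1 - t)) = t ^ ((k + 3 / 2 : ℝ) - 1) * (1 - t) ^ ((1 / 2 : ℝ) - 1) := by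
  obtain ⟨h0, h1⟩ := ht
  rcases h1.eq_or_lt with rfl | h1
  · norm_num [Real.zero_rpow]
  have h1t : 0 < 1 - t := by linarith
  rw [Real.sqrt_eq_rpow, Real.div_rpow h0 h1t.le, show (k + 3 / 2 : ℝ) - 1 = k + 1 / 2 by ring,
    show (1 / 2 : ℝ) - 1 = -(1 / 2) by ring, Real.rpow_neg h1t.le]
  rcases h0.eq_or_lt with rfl | h0
  · rw [Real.zero_rpow (by positivity : (k : ℝ) + 1 / 2 ≠ 0)]
    simp
  rw [Real.rpow_add h0, Real.rpow_natCast]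
  ring

lemma integral_pow_mul_sqrt_div_one_sub (k : ℕ) :
    ∫ t in (0 : ℝ)..1, t ^ k * √(t / (1 - t)) = π * wallisProduct (k + 1) := by
  have hsqrt : √π * √π = π := Real.mul_self_sqrt Real.pi_pos.le
  calc ∫ t in (0 : ℝ)..1, t ^ k * √(t / (1 - t))
      = ∫ t in (0 : ℝ)..1, t ^ ((k + 3 / 2 : ℝ) - 1) * (1 - t) ^ ((1 / 2 : ℝ) - 1) :=
        intervalIntegral.integral_congr fun t ht =>
          pow_mul_sqrt_div_one_sub_eq_rpow k (by rwa [Set.uIcc_of_le zero_le_one] at ht)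
    _ = Real.Gamma ((k + 1 : ℕ) + 1 / 2) * √π / Real.Gamma ((k + 1 : ℕ) + 1) := by
        rw [integral_rpow_mul_one_sub_rpow (by positivity) (by positivity),
          Real.Gamma_one_half_eq]
        push_cast
        ring_nf
    _ = π * wallisProduct (k + 1) := by
        rw [mul_div_right_comm, Real.Gamma_nat_add_half_div_Gamma_nat_add_one,
          mul_right_comm, hsqrt]

lemma intervalIntegrable_pow_mul_sqrt_div_one_sub (k : ℕ) :
    IntervalIntegrable (fun t : ℝ => t ^ k * √(t / (1 - t))) volume 0 1 := by
  have hdom : IntervalIntegrable (fun t : ℝ => (1 - t) ^ (-(1 / 2) : ℝ)) volume 0 1 := by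
    simpa using ((intervalIntegral.intervalIntegrable_rpow' (a := 0) (b := 1) (r := -(1 / 2))
      (by norm_num)).comp_sub_left 1).symm
  refine hdom.mono_fun (by fun_prop) ?_
  rw [Set.uIoc_of_le zero_le_one]
  filter_upwards [self_mem_ae_restrict measurableSet_Ioc] with t ⟨h0, h1⟩
  have h1t : 0 ≤ 1 - t := by linarith
  rw [Real.norm_of_nonneg (by positivity), Real.norm_of_nonneg (by positivity),
    Real.sqrt_div h0.le, Real.rpow_neg h1t, ← Real.sqrt_eq_rpow, ← mul_div_assoc,
    div_eq_mul_inv]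
  refine mul_le_of_le_one_left (by positivity) ?_
  exact mul_le_one₀ (pow_le_one₀ h0.le h1) (Real.sqrt_nonneg _) (Real.sqrt_le_one.2 h1)

noncomputable def mrsPolynomial (p : ℝ[X]) : ℝ[X] :=
  ∑ k ∈ Finset.range (p.natDegree + 1), C (p.coeff k * wallisProduct (k + 1) / 2) * X ^ (k + 1)

lemma eval_mrsPolynomial (p : ℝ[X]) (β : ℝ) :
    (mrsPolynomial p).eval β =
      ∑ k ∈ Finset.range (p.natDegree + 1), p.coeff k * wallisProduct (k + 1) / 2 * β ^ (k + 1) := by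
  simp [mrsPolynomial, eval_finsetSum]

lemma coeff_mrsPolynomial_succ (p : ℝ[X]) (k : ℕ) :
    (mrsPolynomial p).coeff (k + 1) = p.coeff k * wallisProduct (k + 1) / 2 := by
  simp only [mrsPolynomial, finsetSum_coeff, coeff_C_mul_X_pow, add_left_inj,
    Finset.sum_ite_eq, Finset.mem_range]
  split_ifs with hk
  · rfl
  · rw [coeff_eq_zero_of_natDegree_lt (by omega), zero_mul, zero_div]

lemma natDegree_mrsPolynomial {p : ℝ[X]} (hp : p ≠ 0) :
    (mrsPolynomial p).natDegree = p.natDegree + 1 := by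
  refine natDegree_eq_of_le_of_coeff_ne_zero ?_ ?_
  · refine natDegree_sum_le_of_forall_le _ _ fun k hk => ?_
    exact (natDegree_C_mul_X_pow_le _ _).trans (by simpa using Finset.mem_range.1 hk)
  · rw [coeff_mrsPolynomial_succ, coeff_natDegree]
    have := wallisProduct_pos (p.natDegree + 1)
    have := leadingCoeff_ne_zero.2 hp
    positivity

lemma leadingCoeff_mrsPolynomial {p : ℝ[X]} (hp : p ≠ 0) :
    (mrsPolynomial p).leadingCoeff = p.leadingCoeff * wallisProduct (p.natDegree + 1) / 2 := by
  rw [leadingCoeff, natDegree_mrsPolynomial hp, coeff_mrsPolynomial_succ, coeff_natDegree]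

theorem integral_eval_mul_sqrt_div_sub (p : ℝ[X]) {β : ℝ} (hβ : 0 < β) :
    1 / (2 * π) * ∫ x in (0 : ℝ)..β, p.eval x * √(x / (β - x)) = (mrsPolynomial p).eval β := by
  have hscale : ∀ t : ℝ, p.eval (β * t) * √(β * t / (β - β * t)) =
      ∑ k ∈ Finset.range (p.natDegree + 1), p.coeff k * β ^ k * (t ^ k * √(t / (1 - t))) := by
    intro t
    rw [← mul_one_sub, mul_div_mul_left _ _ hβ.ne', eval_eq_sum_range, Finset.sum_mul]
    exact Finset.sum_congr rfl fun k _ => by ring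
  have hsub := intervalIntegral.smul_integral_comp_mul_left
    (fun x => p.eval x * √(x / (β - x))) β (a := 0) (b := 1)
  rw [mul_zero, mul_one, smul_eq_mul] at hsub
  simp only [← hsub, hscale]
  rw [intervalIntegral.integral_finsetSum fun k _ =>
      (intervalIntegrable_pow_mul_sqrt_div_one_sub k).const_mul _, eval_mrsPolynomial,
    Finset.mul_sum, Finset.mul_sum]
  refine Finset.sum_congr rfl fun k _ => ?_
  rw [intervalIntegral.integral_const_mul, integral_pow_mul_sqrt_div_one_sub]
  field_simp
  ring

lemma Polynomial.exists_pos_eval_eq {P : ℝ[X]} (hdeg : 0 < P.degree) (hlead : 0 < P.leadingCoeff)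
    {y : ℝ} (hy : P.eval 0 < y) : ∃ x, 0 < x ∧ P.eval x = y := by
  obtain ⟨M, hM⟩ := eventually_atTop.1
    ((P.tendsto_atTop_of_leadingCoeff_nonneg hdeg hlead.le).eventually_ge_atTop y)
  obtain ⟨x, hx, hPx⟩ := intermediate_value_Icc (le_max_right M 0) P.continuous.continuousOn
    ⟨hy.le, hM _ (le_max_left M 0)⟩
  refine ⟨x, hx.1.lt_of_ne ?_, hPx⟩
  rintro rfl
  exact hy.ne hPx

lemma Continuous.tendsto_atTop_of_comp {α : Type*} {l : Filter α} {f : ℝ → ℝ} (hf : Continuous f)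
    {u : α → ℝ} (hu : ∀ᶠ a in l, 0 ≤ u a) (h : Tendsto (f ∘ u) l atTop) : Tendsto u l atTop := by
  refine tendsto_atTop.2 fun R => ?_
  obtain ⟨M, hM⟩ := (isCompact_Icc (a := 0) (b := R)).bddAbove_image hf.continuousOn
  filter_upwards [hu, h.eventually_gt_atTop M] with a hua hfa
  by_contra! hR
  exact (hM ⟨u a, ⟨hua, hR.le⟩, rfl⟩).not_gt hfa

lemma Polynomial.tendsto_mul_rpow_of_eval_eq {P : ℝ[X]} (hdeg : 0 < P.natDegree)
    (hlead : 0 < P.leadingCoeff) {α : Type*} {l : Filter α} {u v : α → ℝ}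
    (hv : Tendsto v l atTop) (hu : ∀ᶠ a in l, 0 ≤ u a) (heq : ∀ᶠ a in l, P.eval (u a) = v a) :
    Tendsto (fun a => u a * v a ^ (-(1 : ℝ) / P.natDegree)) l
      (𝓝 (P.leadingCoeff ^ (-(1 : ℝ) / P.natDegree))) := by
  set d := P.natDegree
  set c := P.leadingCoeff
  have hd : (0 : ℝ) < d := by exact_mod_cast hdeg
  have hu_top : Tendsto u l atTop :=
    P.continuous.tendsto_atTop_of_comp hu (hv.congr' (heq.mono fun _ h => h.symm))
  have hequiv : (fun a => c * u a ^ d) ~[l] v :=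
    ((P.isEquivalent_atTop_lead.comp_tendsto hu_top).congr_left heq).symm
  have hratio : Tendsto (fun a => (c * u a ^ d / v a) ^ (1 / (d : ℝ))) l (𝓝 1) := by
    have := ((isEquivalent_iff_tendsto_one
      (hv.eventually_gt_atTop 0 |>.mono fun _ h => h.ne')).1 hequiv).rpow_const
      (p := 1 / (d : ℝ)) (Or.inr (by positivity))
    rwa [Real.one_rpow] at this
  have hc : c ^ (-(1 : ℝ) / d) * c ^ (1 / (d : ℝ)) = 1 := by
    rw [← Real.rpow_add hlead, neg_div, neg_add_cancel, Real.rpow_zero]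
  refine (hratio.const_mul (c ^ (-(1 : ℝ) / d))).congr' ?_ |>.trans (by rw [mul_one])
  filter_upwards [hu, hv.eventually_gt_atTop 0] with a hua hva
  rw [Real.div_rpow (by positivity) hva.le, Real.mul_rpow hlead.le (by positivity),
    ← Real.rpow_natCast, ← Real.rpow_mul hua, mul_one_div_cancel hd.ne', Real.rpow_one,
    mul_div_assoc, ← mul_assoc, hc, one_mul, neg_div, Real.rpow_neg hva.le, div_eq_mul_inv]

theorem mrs_number_exists (m : ℕ) (hm : 1 ≤ m) (Q : Polynomial ℝ)
    (hdeg : Q.natDegree = m) (hlead : 0 < Q.leadingCoeff)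
    (A : ℝ) (hA : A = ∏ j ∈ Finset.Icc 1 m, (2 * (j : ℝ) - 1) / (2 * (j : ℝ))) :
    ∃ (n₁ : ℕ) (β : ℕ → ℝ),
      (∀ n, n₁ ≤ n → 0 < β n ∧
        (1 / (2 * Real.pi)) *
          ∫ x in (0:ℝ)..(β n),
            (Polynomial.derivative Q).eval x * Real.sqrt (x / (β n - x)) = n) ∧
      Tendsto (fun n : ℕ => β n * (n : ℝ) ^ (-(1:ℝ) / m)) atTop
        (nhds (((1/2) * m * Q.leadingCoeff * A) ^ (-(1:ℝ) / m))) := by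
  set P := mrsPolynomial (derivative Q)
  have hQ' : derivative Q ≠ 0 := derivative_ne_zero.2 (by omega)
  have hPdeg : P.natDegree = m := by
    rw [natDegree_mrsPolynomial hQ', natDegree_derivative]
    omega
  have hPlead : P.leadingCoeff = 1 / 2 * m * Q.leadingCoeff * A := by
    rw [leadingCoeff_mrsPolynomial hQ', leadingCoeff_derivative, natDegree_derivative, hdeg,
      Nat.sub_add_cancel hm, hA, wallisProduct]
    ring
  have hPlead_pos : 0 < P.leadingCoeff := by
    have : 0 < A := hA ▸ wallisProduct_pos m
    have : 0 < m := hm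
    rw [hPlead]
    positivity
  have hsolve : ∀ n : ℕ, ∃ x : ℝ, 1 ≤ n → 0 < x ∧ P.eval x = n := fun n => by
    rcases Nat.eq_zero_or_pos n with rfl | hn
    · exact ⟨0, by omega⟩
    obtain ⟨x, hx⟩ := P.exists_pos_eval_eq (natDegree_pos_iff_degree_pos.1 (by omega)) hPlead_pos
      (y := n) (by simpa [eval_mrsPolynomial, P] using hn)
    exact ⟨x, fun _ => hx⟩
  choose β hβ using hsolve
  refine ⟨1, β, fun n hn => ⟨(hβ n hn).1, ?_⟩, ?_⟩
  · rw [integral_eval_mul_sqrt_div_sub _ (hβ n hn).1, (hβ n hn).2]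
  · rw [← hPlead, ← hPdeg]
    exact P.tendsto_mul_rpow_of_eval_eq (by omega) hPlead_pos tendsto_natCast_atTop_atTop
      ((eventually_ge_atTop 1).mono fun n hn => (hβ n hn).1.le)
      ((eventually_ge_atTop 1).mono fun n hn => (hβ n hn).2)
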